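/- arXiv:2406.10772 — 2 statements merged into one kernel-verified Lean document; each statement's English description precedes it below -/
import Mathlib

section
/- Let p ∈ (0,1), λ = min(p, 1−p), let q ≥ 2 be real, and set γ = √(λ/(1−λ)) / √(q−1). Then for every f : {−1,1}^n → ℝ, under the p-biased measure μ one has ‖T_γ f‖_q ≤ ‖f‖₂. -/
/-!
Write `χ` for the normalized character of one `p`-biased bit. The noise operator has kernel
`∏ᵢ (1 + γ χ(xᵢ) χ(yᵢ))`, so fixing the first coordinate `b` turns `T_γ f` into `T_γ g_b` on the
remaining coordinates, with `g_b = d + γ χ(b) e` for the first-coordinate Fourier coefficients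
`d, e` of `f`, and `‖f‖₂² = E[d² + e²]`. By induction on `n` and Minkowski's inequality in
`L^{q/2}` of the first bit, everything reduces to the one-bit inequality
`E_b |α + γ χ(b) β|^q ≤ (α² + β²)^{q/2}`. As `χ` has mean zero and `(q - 1) γ² χ(b)² ≤ 1`
(this is where `λ = min(p, 1 - p)` enters), convexity of `x ↦ |α + x β|^q` reduces it to the
symmetric Bonami inequality `(|a - d|^q + |a + d|^q)/2 ≤ (a² + (q - 1) d²)^{q/2}`. The latter holds
because `d ↦ (((1 + d)^q + (1 - d)^q)/2)^{2/q}` has second derivative at most `2(q - 1)` on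
`[0, 1]`, by the power-mean inequality.
-/

open Filter Function Real

noncomputable def pwt (p : ℝ) {n : ℕ} (x : Fin n → Bool) : ℝ :=
  ∏ i, if x i then p else 1 - p

noncomputable def pE (p : ℝ) {n : ℕ} (f : (Fin n → Bool) → ℝ) : ℝ :=
  ∑ x, pwt p x * f x

noncomputable def pNorm (p q : ℝ) {n : ℕ} (f : (Fin n → Bool) → ℝ) : ℝ :=
  (pE p fun x => |f x| ^ q) ^ (1 / q)

noncomputable def pVar (p : ℝ) {n : ℕ} (f : (Fin n → Bool) → ℝ) : ℝ :=
  pE p (fun x => f x ^ 2) - (pE p f) ^ 2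

noncomputable def condE (p : ℝ) {n : ℕ} (i : Fin n) (f : (Fin n → Bool) → ℝ) :
    (Fin n → Bool) → ℝ :=
  fun x => (1 - p) * f (Function.update x i false) + p * f (Function.update x i true)

noncomputable def chi (p : ℝ) {n : ℕ} (S : Finset (Fin n)) (x : Fin n → Bool) : ℝ :=
  ∏ i ∈ S, ((if x i then (1:ℝ) else -1) - (2 * p - 1)) / (2 * Real.sqrt (p * (1 - p)))

noncomputable def fhat (p : ℝ) {n : ℕ} (f : (Fin n → Bool) → ℝ) (S : Finset (Fin n)) : ℝ :=
  pE p fun x => f x * chi p S x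

noncomputable def noiseOp (p δ : ℝ) {n : ℕ} (f : (Fin n → Bool) → ℝ) :
    (Fin n → Bool) → ℝ :=
  fun x => ∑ S : Finset (Fin n), δ ^ S.card * fhat p f S * chi p S x

open Set

lemma monotoneOn_Icc_of_hasDerivAt_nonneg {f f' : ℝ → ℝ} {a b : ℝ}
    (hf : ∀ x ∈ Icc a b, HasDerivAt f (f' x) x) (hf' : ∀ x ∈ Ioo a b, 0 ≤ f' x) :
    MonotoneOn f (Icc a b) :=
  monotoneOn_of_hasDerivWithinAt_nonneg (convex_Icc a b)
    (fun x hx => (hf x hx).continuousAt.continuousWithinAt)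
    (fun x hx => (hf x (interior_subset hx)).hasDerivWithinAt)
    (by simpa only [interior_Icc] using hf')

lemma sq_rpow_half (x q : ℝ) : (x ^ 2) ^ (q / 2) = |x| ^ q := by
  rw [← sq_abs, ← rpow_natCast, ← rpow_mul (abs_nonneg x)]
  congr 1
  push_cast
  ring

lemma rpow_sub_two_mean_le {q : ℝ} (hq : 2 ≤ q) {A B : ℝ} (hA : 0 ≤ A) (hB : 0 ≤ B) :
    (A ^ (q - 2) + B ^ (q - 2)) / 2 ≤ ((A ^ q + B ^ q) / 2) ^ (1 - 2 / q) := by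
  rcases hq.eq_or_lt with rfl | hq
  · norm_num
  have hs : 1 ≤ q / (q - 2) := by rw [le_div_iff₀ (by linarith)]; linarith
  have hpow : ∀ {X : ℝ}, 0 ≤ X → (X ^ (q - 2)) ^ (q / (q - 2)) = X ^ q := fun hX => by
    rw [← rpow_mul hX]; congr 1; field_simp
  have hjensen := (convexOn_rpow hs).2 (rpow_nonneg hA (q - 2)) (rpow_nonneg hB (q - 2))
    (by norm_num : (0:ℝ) ≤ 1 / 2) (by norm_num : (0:ℝ) ≤ 1 / 2) (add_halves 1)
  simp only [smul_eq_mul, hpow hA, hpow hB] at hjensen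
  rw [show 1 - 2 / q = (q / (q - 2))⁻¹ by field_simp,
    le_rpow_inv_iff_of_pos (by positivity) (by positivity) (by positivity)]
  calc ((A ^ (q - 2) + B ^ (q - 2)) / 2) ^ (q / (q - 2))
      = (1 / 2 * A ^ (q - 2) + 1 / 2 * B ^ (q - 2)) ^ (q / (q - 2)) := by ring_nf
    _ ≤ 1 / 2 * A ^ q + 1 / 2 * B ^ q := hjensen
    _ = (A ^ q + B ^ q) / 2 := by ring

lemma weighted_Lp_sum_le {ι κ : Type*} [Fintype κ] (s : Finset ι) {r : ℝ} (hr : 1 ≤ r)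
    {w : κ → ℝ} (hw : ∀ k, 0 ≤ w k) (u : ι → κ → ℝ) (hu : ∀ i k, 0 ≤ u i k) :
    (∑ k, w k * (∑ i ∈ s, u i k) ^ r) ^ (1 / r)
      ≤ ∑ i ∈ s, (∑ k, w k * u i k ^ r) ^ (1 / r) := by
  have hweight : ∀ k {z : ℝ}, 0 ≤ z → (w k ^ (1 / r) * z) ^ r = w k * z ^ r := fun k z hz => by
    rw [mul_rpow (rpow_nonneg (hw k) _) hz, ← rpow_mul (hw k), one_div_mul_cancel (by linarith),
      rpow_one]
  induction s using Finset.cons_induction with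
  | empty => simp [zero_rpow (by linarith : r ≠ 0), zero_rpow (inv_ne_zero (by linarith : r ≠ 0))]
  | cons a s ha ih =>
    have hs : ∀ k, 0 ≤ ∑ i ∈ s, u i k := fun k => Finset.sum_nonneg fun i _ => hu i k
    simp only [Finset.sum_cons]
    calc (∑ k, w k * (u a k + ∑ i ∈ s, u i k) ^ r) ^ (1 / r)
        = (∑ k, (w k ^ (1 / r) * u a k + w k ^ (1 / r) * ∑ i ∈ s, u i k) ^ r) ^ (1 / r) := by
          simp only [← mul_add, hweight _ (add_nonneg (hu a _) (hs _))]
      _ ≤ (∑ k, (w k ^ (1 / r) * u a k) ^ r) ^ (1 / r)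
          + (∑ k, (w k ^ (1 / r) * ∑ i ∈ s, u i k) ^ r) ^ (1 / r) :=
          Lp_add_le_of_nonneg Finset.univ hr (fun k _ => mul_nonneg (rpow_nonneg (hw k) _) (hu a k))
            (fun k _ => mul_nonneg (rpow_nonneg (hw k) _) (hs k))
      _ ≤ _ := by
          simp only [hweight _ (hu a _), hweight _ (hs _)]
          exact add_le_add_right ih _

-- `E (1 + d ε)^q` and `E ε (1 + d ε)^(q - 1)` for a uniform sign `ε` (when `|d| ≤ 1`).
noncomputable def signMoment (q d : ℝ) : ℝ := ((1 + d) ^ q + (1 - d) ^ q) / 2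

noncomputable def signOddMoment (q d : ℝ) : ℝ := ((1 + d) ^ (q - 1) - (1 - d) ^ (q - 1)) / 2

lemma hasDerivAt_signMoment {q : ℝ} (hq : 1 ≤ q) (d : ℝ) :
    HasDerivAt (signMoment q) (q * signOddMoment q d) d := by
  have hA := ((hasDerivAt_id' d).const_add 1).rpow_const (p := q) (Or.inr hq)
  have hB := ((hasDerivAt_id' d).const_sub 1).rpow_const (p := q) (Or.inr hq)
  refine ((hA.add hB).div_const 2).congr_deriv ?_
  simp only [signOddMoment]; ring

lemma hasDerivAt_signOddMoment {q : ℝ} (hq : 2 ≤ q) (d : ℝ) :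
    HasDerivAt (signOddMoment q) ((q - 1) * signMoment (q - 2) d) d := by
  have hq' : 1 ≤ q - 1 := by linarith
  have hA := ((hasDerivAt_id' d).const_add 1).rpow_const (Or.inr hq')
  have hB := ((hasDerivAt_id' d).const_sub 1).rpow_const (Or.inr hq')
  refine ((hA.sub hB).div_const 2).congr_deriv ?_
  simp only [signMoment, show q - 1 - 1 = q - 2 by ring]; ring

lemma signMoment_pos {q d : ℝ} (hq : 0 ≤ q) (hd : d ∈ Icc (0:ℝ) 1) : 0 < signMoment q d := by
  have hA : 1 ≤ (1 + d) ^ q := one_le_rpow (by linarith [hd.1]) hq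
  have hB : 0 ≤ (1 - d) ^ q := rpow_nonneg (by linarith [hd.2]) q
  unfold signMoment; linarith

-- The left side is the derivative of `signMoment q ^ (2/q - 1) * signOddMoment q`, which is half
-- the derivative of `signMoment q ^ (2/q)`.
lemma signMoment_rpow_deriv_le {q d : ℝ} (hq : 2 ≤ q) (hd : d ∈ Icc (0:ℝ) 1) :
    q * signOddMoment q d * (2 / q - 1) * signMoment q d ^ (2 / q - 1 - 1) * signOddMoment q d
      + signMoment q d ^ (2 / q - 1) * ((q - 1) * signMoment (q - 2) d) ≤ q - 1 := by
  have hG := signMoment_pos (by linarith) hd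
  have hconcave : q * (2 / q - 1) ≤ 0 := by
    rw [mul_sub, mul_div_cancel₀ _ (by linarith)]; linarith
  have hfirst : q * signOddMoment q d * (2 / q - 1) * signMoment q d ^ (2 / q - 1 - 1)
      * signOddMoment q d ≤ 0 := by
    have := mul_nonpos_of_nonpos_of_nonneg hconcave
      (mul_nonneg (rpow_nonneg hG.le (2 / q - 1 - 1)) (sq_nonneg (signOddMoment q d)))
    linarith
  have hpowermean : signMoment (q - 2) d ≤ signMoment q d ^ (1 - 2 / q) :=
    rpow_sub_two_mean_le hq (by linarith [hd.1]) (by linarith [hd.2])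
  have hsecond : signMoment q d ^ (2 / q - 1) * signMoment (q - 2) d ≤ 1 := by
    calc signMoment q d ^ (2 / q - 1) * signMoment (q - 2) d
        ≤ signMoment q d ^ (2 / q - 1) * signMoment q d ^ (1 - 2 / q) := by gcongr
      _ = 1 := by rw [← rpow_add hG]; norm_num
  nlinarith

lemma hasDerivAt_signMoment_rpow {q d : ℝ} (hq : 2 ≤ q) (hd : d ∈ Icc (0:ℝ) 1) :
    HasDerivAt (fun x => signMoment q x ^ (2 / q))
      (2 * (signMoment q d ^ (2 / q - 1) * signOddMoment q d)) d := by
  refine ((hasDerivAt_signMoment (by linarith) d).rpow_const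
    (Or.inl (signMoment_pos (by linarith) hd).ne')).congr_deriv ?_
  field_simp

lemma monotoneOn_sub_signMoment_deriv {q : ℝ} (hq : 2 ≤ q) :
    MonotoneOn (fun d => (q - 1) * d - signMoment q d ^ (2 / q - 1) * signOddMoment q d)
      (Icc 0 1) := by
  refine monotoneOn_Icc_of_hasDerivAt_nonneg (fun d hd => ?_)
    (fun d hd => sub_nonneg.2 (signMoment_rpow_deriv_le hq (Ioo_subset_Icc_self hd)))
  have hG := (hasDerivAt_signMoment (by linarith) d).rpow_const (p := 2 / q - 1)
    (Or.inl (signMoment_pos (by linarith) hd).ne')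
  have := (hasDerivAt_id' d).const_mul (q - 1)
  exact (this.sub (hG.mul (hasDerivAt_signOddMoment hq d))).congr_deriv (by ring)

lemma signMoment_rpow_le {q d : ℝ} (hq : 2 ≤ q) (hd : d ∈ Icc (0:ℝ) 1) :
    signMoment q d ^ (2 / q) ≤ 1 + (q - 1) * d ^ 2 := by
  have h0 : (0:ℝ) ∈ Icc (0:ℝ) 1 := left_mem_Icc.2 zero_le_one
  have hmono : MonotoneOn (fun d => 1 + (q - 1) * d ^ 2 - signMoment q d ^ (2 / q)) (Icc 0 1) := by
    refine monotoneOn_Icc_of_hasDerivAt_nonneg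
      (f' := fun x => 2 * ((q - 1) * x - signMoment q x ^ (2 / q - 1) * signOddMoment q x))
      (fun x hx => ?_) (fun x hx => ?_)
    · have := (((hasDerivAt_pow 2 x).const_mul (q - 1)).const_add 1).sub
        (hasDerivAt_signMoment_rpow hq hx)
      exact this.congr_deriv (by simp only [Nat.cast_ofNat]; ring)
    · have := monotoneOn_sub_signMoment_deriv hq h0 (Ioo_subset_Icc_self hx) hx.1.le
      have hO0 : signOddMoment q 0 = 0 := by norm_num [signOddMoment]
      simp only [hO0, mul_zero, sub_zero] at this
      linarith
  have hG0 : signMoment q 0 = 1 := by norm_num [signMoment]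
  have := hmono h0 hd hd.1
  norm_num [hG0] at this
  linarith

lemma signMoment_le {q d : ℝ} (hq : 2 ≤ q) (hd : d ∈ Icc (0:ℝ) 1) :
    signMoment q d ≤ (1 + (q - 1) * d ^ 2) ^ (q / 2) := by
  have hG := (signMoment_pos (by linarith) hd).le
  calc signMoment q d = (signMoment q d ^ (2 / q)) ^ (q / 2) := by
        rw [← rpow_mul hG, show 2 / q * (q / 2) = 1 by field_simp, rpow_one]
    _ ≤ (1 + (q - 1) * d ^ 2) ^ (q / 2) := by
        gcongr
        exact signMoment_rpow_le hq hd

lemma sub_rpow_add_add_rpow_le_of_le {q a d : ℝ} (hq : 2 ≤ q) (hd : 0 ≤ d) (hda : d ≤ a) :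
    ((a - d) ^ q + (a + d) ^ q) / 2 ≤ (a ^ 2 + (q - 1) * d ^ 2) ^ (q / 2) := by
  rcases (hd.trans hda).eq_or_lt with rfl | ha
  · obtain rfl : d = 0 := le_antisymm hda hd
    simp [zero_rpow (by linarith : q ≠ 0), zero_rpow (by linarith : q / 2 ≠ 0)]
  have ht : d / a ∈ Icc (0:ℝ) 1 := ⟨by positivity, (div_le_one ha).2 hda⟩
  have hscale : ∀ s : ℝ, 0 ≤ s → a ^ q * s ^ q = (a * s) ^ q := fun s hs =>
    (mul_rpow ha.le hs).symm
  have hsq : a ^ q = (a ^ 2) ^ (q / 2) := by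
    rw [← rpow_natCast, ← rpow_mul ha.le]; congr 1; push_cast; ring
  calc ((a - d) ^ q + (a + d) ^ q) / 2 = a ^ q * signMoment q (d / a) := by
        rw [signMoment, mul_div_assoc', mul_add, hscale _ (by linarith [ht.1]),
          hscale _ (by linarith [ht.2]), mul_add, mul_sub, mul_div_cancel₀ _ ha.ne', mul_one,
          add_comm]
    _ ≤ a ^ q * (1 + (q - 1) * (d / a) ^ 2) ^ (q / 2) := by
        gcongr; exact signMoment_le hq ht
    _ = (a ^ 2 + (q - 1) * d ^ 2) ^ (q / 2) := by
        rw [hsq, ← mul_rpow (by positivity) (by nlinarith [ht.1])]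
        congr 1
        field_simp

lemma abs_sub_rpow_add_abs_add_rpow_le_of_nonneg {q a d : ℝ} (hq : 2 ≤ q) (ha : 0 ≤ a)
    (hd : 0 ≤ d) :
    (|a - d| ^ q + |a + d| ^ q) / 2 ≤ (a ^ 2 + (q - 1) * d ^ 2) ^ (q / 2) := by
  rw [abs_of_nonneg (by linarith : 0 ≤ a + d)]
  rcases le_total d a with hda | had
  · rw [abs_of_nonneg (by linarith : 0 ≤ a - d)]
    exact sub_rpow_add_add_rpow_le_of_le hq hd hda
  · rw [abs_sub_comm, abs_of_nonneg (by linarith : 0 ≤ d - a), add_comm a d]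
    calc ((d - a) ^ q + (d + a) ^ q) / 2 ≤ (d ^ 2 + (q - 1) * a ^ 2) ^ (q / 2) :=
          sub_rpow_add_add_rpow_le_of_le hq ha had
      _ ≤ (a ^ 2 + (q - 1) * d ^ 2) ^ (q / 2) := by
          have hsq : a ^ 2 ≤ d ^ 2 := pow_le_pow_left₀ ha had 2
          refine rpow_le_rpow (by nlinarith [sq_nonneg a]) ?_ (by positivity)
          nlinarith [mul_le_mul_of_nonneg_left hsq (by linarith : (0:ℝ) ≤ q - 2)]

lemma abs_sub_rpow_add_abs_add_rpow_le {q : ℝ} (hq : 2 ≤ q) (a d : ℝ) :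
    (|a - d| ^ q + |a + d| ^ q) / 2 ≤ (a ^ 2 + (q - 1) * d ^ 2) ^ (q / 2) := by
  have hflip : ∀ x y : ℝ, |-x - y| ^ q + |-x + y| ^ q = |x - y| ^ q + |x + y| ^ q := fun x y => by
    rw [show -x - y = -(x + y) by ring, show -x + y = -(x - y) by ring, abs_neg, abs_neg,
      add_comm]
  have hflip' : ∀ x y : ℝ, |x - -y| ^ q + |x + -y| ^ q = |x - y| ^ q + |x + y| ^ q :=
    fun x y => by rw [sub_neg_eq_add, ← sub_eq_add_neg, add_comm]
  have habs : |a - d| ^ q + |a + d| ^ q = |(|a| - |d|)| ^ q + |(|a| + |d|)| ^ q := by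
    rcases abs_choice a with ha | ha <;> rcases abs_choice d with hd | hd <;>
      simp only [ha, hd, hflip, hflip']
  rw [habs, ← sq_abs a, ← sq_abs d]
  exact abs_sub_rpow_add_abs_add_rpow_le_of_nonneg hq (abs_nonneg a) (abs_nonneg d)

lemma abs_add_mul_rpow_le_chord {q u x : ℝ} (hq : 1 ≤ q) (hu : 0 < u) (hx : |x| ≤ u) (α β : ℝ) :
    |α + x * β| ^ q ≤ (|α - u * β| ^ q + |α + u * β| ^ q) / 2
      + x * (|α + u * β| ^ q - |α - u * β| ^ q) / (2 * u) := by
  obtain ⟨hxl, hxr⟩ := abs_le.1 hx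
  set t := (u - x) / (2 * u)
  have ht : 0 ≤ t := div_nonneg (by linarith) (by linarith)
  have ht' : 0 ≤ 1 - t := by
    rw [show 1 - t = (x + u) / (2 * u) by simp only [t]; field_simp; ring]
    exact div_nonneg (by linarith) (by linarith)
  have hsplit : α + x * β = t * (α - u * β) + (1 - t) * (α + u * β) := by
    simp only [t]; field_simp; ring
  have htri : |α + x * β| ≤ t * |α - u * β| + (1 - t) * |α + u * β| := by
    rw [hsplit]
    refine (abs_add_le _ _).trans_eq ?_
    rw [abs_mul, abs_mul, abs_of_nonneg ht, abs_of_nonneg ht']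
  have hconvex := (convexOn_rpow hq).2 (abs_nonneg (α - u * β)) (abs_nonneg (α + u * β)) ht ht'
    (add_sub_cancel t 1)
  simp only [smul_eq_mul] at hconvex
  calc |α + x * β| ^ q ≤ (t * |α - u * β| + (1 - t) * |α + u * β|) ^ q := by gcongr
    _ ≤ t * |α - u * β| ^ q + (1 - t) * |α + u * β| ^ q := hconvex
    _ = _ := by simp only [t]; field_simp; ring

lemma sum_mul_abs_add_mul_rpow_le {κ : Type*} [Fintype κ] {q : ℝ} (hq : 2 ≤ q) {w x : κ → ℝ}
    (hw : ∑ k, w k = 1) (hw₀ : ∀ k, 0 ≤ w k) (hwx : ∑ k, w k * x k = 0)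
    (hx : ∀ k, (q - 1) * x k ^ 2 ≤ 1) (α β : ℝ) :
    ∑ k, w k * |α + x k * β| ^ q ≤ (α ^ 2 + β ^ 2) ^ (q / 2) := by
  have hq1 : 0 < q - 1 := by linarith
  set u := √(1 / (q - 1))
  have hu : 0 < u := sqrt_pos.2 (one_div_pos.2 hq1)
  have hxu : ∀ k, |x k| ≤ u := fun k =>
    abs_le_sqrt ((le_div_iff₀ hq1).2 (by linarith [hx k]))
  set A := |α - u * β| ^ q
  set B := |α + u * β| ^ q
  -- averaging the chord bound sees only the total mass and the mean of `w`
  calc ∑ k, w k * |α + x k * β| ^ q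
      ≤ ∑ k, w k * ((A + B) / 2 + x k * (B - A) / (2 * u)) :=
        Finset.sum_le_sum fun k _ =>
          mul_le_mul_of_nonneg_left (abs_add_mul_rpow_le_chord (by linarith) hu (hxu k) α β) (hw₀ k)
    _ = (A + B) / 2 * ∑ k, w k + (∑ k, w k * x k) * ((B - A) / (2 * u)) := by
        simp only [Finset.mul_sum, Finset.sum_mul, ← Finset.sum_add_distrib]
        refine Finset.sum_congr rfl fun k _ => ?_
        ring
    _ = (A + B) / 2 := by rw [hw, hwx]; ring
    _ ≤ (α ^ 2 + (q - 1) * (u * β) ^ 2) ^ (q / 2) := by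
        simpa [A, B, add_comm] using abs_sub_rpow_add_abs_add_rpow_le hq α (u * β)
    _ = (α ^ 2 + β ^ 2) ^ (q / 2) := by
        rw [mul_pow, sq_sqrt (one_div_pos.2 hq1).le, ← mul_assoc, mul_one_div_cancel hq1.ne',
          one_mul]

noncomputable def bitWeight (p : ℝ) (b : Bool) : ℝ := if b then p else 1 - p

noncomputable def bitChar (p : ℝ) (b : Bool) : ℝ :=
  ((if b then (1:ℝ) else -1) - (2 * p - 1)) / (2 * √(p * (1 - p)))

lemma pwt_eq_prod (p : ℝ) {n : ℕ} (x : Fin n → Bool) : pwt p x = ∏ i, bitWeight p (x i) := rfl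

lemma chi_eq_prod (p : ℝ) {n : ℕ} (S : Finset (Fin n)) (x : Fin n → Bool) :
    chi p S x = ∏ i ∈ S, bitChar p (x i) := rfl

section BiasedBit

variable {p : ℝ}

lemma bitWeight_nonneg (hp : p ∈ Ioo (0:ℝ) 1) (b : Bool) : 0 ≤ bitWeight p b := by
  cases b <;> simp only [bitWeight, Bool.false_eq_true, if_false, if_true] <;> linarith [hp.1, hp.2]

lemma sum_bitWeight : ∑ b, bitWeight p b = 1 := by
  simp [bitWeight]

lemma bitChar_false (hp : p ∈ Ioo (0:ℝ) 1) : bitChar p false = -(p / √(p * (1 - p))) := by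
  have : 0 < √(p * (1 - p)) := sqrt_pos.2 (by nlinarith [hp.1, hp.2])
  simp only [bitChar, Bool.false_eq_true, if_false]
  field_simp
  ring

lemma bitChar_true (hp : p ∈ Ioo (0:ℝ) 1) : bitChar p true = (1 - p) / √(p * (1 - p)) := by
  have : 0 < √(p * (1 - p)) := sqrt_pos.2 (by nlinarith [hp.1, hp.2])
  simp only [bitChar, if_true]
  field_simp
  ring

lemma sum_bitWeight_mul_bitChar (hp : p ∈ Ioo (0:ℝ) 1) :
    ∑ b, bitWeight p b * bitChar p b = 0 := by
  simp only [Fintype.sum_bool, bitChar_true hp, bitChar_false hp, bitWeight, if_true,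
    Bool.false_eq_true, if_false]
  ring

lemma sum_bitWeight_mul_sq (hp : p ∈ Ioo (0:ℝ) 1) (a : Bool → ℝ) :
    ∑ b, bitWeight p b * a b ^ 2
      = (∑ b, bitWeight p b * a b) ^ 2 + (∑ b, bitWeight p b * bitChar p b * a b) ^ 2 := by
  have hs : 0 < √(p * (1 - p)) := sqrt_pos.2 (by nlinarith [hp.1, hp.2])
  have hs2 : √(p * (1 - p)) ^ 2 = p * (1 - p) := sq_sqrt (by nlinarith [hp.1, hp.2])
  simp only [Fintype.sum_bool, bitChar_true hp, bitChar_false hp, bitWeight, if_true,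
    Bool.false_eq_true, if_false]
  field_simp
  rw [hs2]
  ring

lemma min_ratio_mul_bitChar_sq_le (hp : p ∈ Ioo (0:ℝ) 1) (b : Bool) :
    min p (1 - p) / (1 - min p (1 - p)) * bitChar p b ^ 2 ≤ 1 := by
  obtain ⟨hp0, hp1⟩ := hp
  have hs2 : √(p * (1 - p)) ^ 2 = p * (1 - p) := sq_sqrt (by nlinarith)
  have hm1 : min p (1 - p) < 1 := (min_le_left _ _).trans_lt hp1
  have hm0 : 0 < min p (1 - p) := lt_min hp0 (by linarith)
  rw [div_mul_eq_mul_div, div_le_one (by linarith)]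
  cases b
  · rw [bitChar_false ⟨hp0, hp1⟩, neg_sq, div_pow, hs2]
    have := min_le_right p (1 - p)
    rw [mul_div_assoc', div_le_iff₀ (by nlinarith)]
    nlinarith
  · rw [bitChar_true ⟨hp0, hp1⟩, div_pow, hs2]
    have := min_le_left p (1 - p)
    rw [mul_div_assoc', div_le_iff₀ (by nlinarith)]
    nlinarith

end BiasedBit

section Cube

variable {p : ℝ} {n : ℕ}

lemma pE_nonneg (hp : p ∈ Ioo (0:ℝ) 1) {F : (Fin n → Bool) → ℝ} (hF : ∀ x, 0 ≤ F x) :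
    0 ≤ pE p F :=
  Finset.sum_nonneg fun x _ =>
    mul_nonneg (Finset.prod_nonneg fun i _ => bitWeight_nonneg hp (x i)) (hF x)

lemma pE_fin_zero (F : (Fin 0 → Bool) → ℝ) (x : Fin 0 → Bool) : pE p F = F x := by
  simp only [pE, pwt, Finset.univ_eq_empty, Finset.prod_empty, one_mul, Fintype.sum_unique]
  exact congrArg F (Subsingleton.elim _ _)

lemma pE_succ (F : (Fin (n + 1) → Bool) → ℝ) :
    pE p F = ∑ b, bitWeight p b * pE p (fun y => F (Fin.cons b y)) := by
  simp only [pE, ← (Fin.consEquiv fun _ => Bool).sum_comp, Fintype.sum_prod_type, Finset.mul_sum]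
  refine Finset.sum_congr rfl fun b _ => Finset.sum_congr rfl fun y _ => ?_
  simp only [pwt_eq_prod, Fin.prod_univ_succ, mul_assoc]
  rfl

lemma sum_mul_pE {κ : Type*} [Fintype κ] (c : κ → ℝ) (F : κ → (Fin n → Bool) → ℝ) :
    ∑ k, c k * pE p (F k) = pE p (fun y => ∑ k, c k * F k y) := by
  simp only [pE, Finset.mul_sum]
  rw [Finset.sum_comm]
  exact Finset.sum_congr rfl fun y _ => Finset.sum_congr rfl fun k _ => by ring

end Cube

noncomputable def noiseKernel (p γ : ℝ) {n : ℕ} (x y : Fin n → Bool) : ℝ :=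
  ∏ i, (1 + γ * bitChar p (x i) * bitChar p (y i))

-- `f (Fin.cons b y) = headMean p f y + bitChar p b * headCoeff p f y`.
noncomputable def headMean (p : ℝ) {n : ℕ} (f : (Fin (n + 1) → Bool) → ℝ) (y : Fin n → Bool) : ℝ :=
  ∑ b, bitWeight p b * f (Fin.cons b y)

noncomputable def headCoeff (p : ℝ) {n : ℕ} (f : (Fin (n + 1) → Bool) → ℝ) (y : Fin n → Bool) :
    ℝ :=
  ∑ b, bitWeight p b * bitChar p b * f (Fin.cons b y)

section NoiseOp

variable {p γ : ℝ} {n : ℕ}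

lemma noiseOp_eq_pE_kernel (f : (Fin n → Bool) → ℝ) (x : Fin n → Bool) :
    noiseOp p γ f x = pE p (fun y => f y * noiseKernel p γ x y) := by
  simp only [noiseOp, fhat, pE, noiseKernel, Finset.prod_one_add, Finset.powerset_univ,
    Finset.mul_sum, Finset.sum_mul]
  rw [Finset.sum_comm]
  refine Finset.sum_congr rfl fun y _ => Finset.sum_congr rfl fun S _ => ?_
  rw [Finset.prod_mul_distrib, Finset.prod_mul_distrib, Finset.prod_const, chi_eq_prod,
    chi_eq_prod]
  ring

lemma noiseKernel_cons (b c : Bool) (x y : Fin n → Bool) :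
    noiseKernel p γ (Fin.cons b x) (Fin.cons c y)
      = (1 + γ * bitChar p b * bitChar p c) * noiseKernel p γ x y := by
  simp only [noiseKernel, Fin.prod_univ_succ, Fin.cons_zero, Fin.cons_succ]

lemma noiseOp_fin_zero (f : (Fin 0 → Bool) → ℝ) : noiseOp p γ f = f := by
  funext x
  rw [noiseOp_eq_pE_kernel, pE_fin_zero _ x]
  simp [noiseKernel]

lemma noiseOp_cons (f : (Fin (n + 1) → Bool) → ℝ) (b : Bool) (x : Fin n → Bool) :
    noiseOp p γ f (Fin.cons b x)
      = noiseOp p γ (fun y => headMean p f y + γ * bitChar p b * headCoeff p f y) x := by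
  simp only [noiseOp_eq_pE_kernel, pE_succ (p := p) (fun y => f y * noiseKernel p γ _ y),
    noiseKernel_cons, sum_mul_pE]
  congr 1
  funext y
  simp only [headMean, headCoeff, Fintype.sum_bool]
  ring

lemma pE_sq_eq_headMean_sq_add_headCoeff_sq (hp : p ∈ Ioo (0:ℝ) 1)
    (f : (Fin (n + 1) → Bool) → ℝ) :
    pE p (fun x => f x ^ 2) = pE p (fun y => headMean p f y ^ 2 + headCoeff p f y ^ 2) := by
  rw [pE_succ, sum_mul_pE]
  congr 1
  funext y
  exact sum_bitWeight_mul_sq hp fun b => f (Fin.cons b y)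

end NoiseOp

section Hypercontractivity

variable {p q γ : ℝ} {n : ℕ}

lemma sum_bitWeight_mul_pE_rpow_le (hp : p ∈ Ioo (0:ℝ) 1) (hq : 2 ≤ q)
    (hγ : ∀ b, (q - 1) * (γ * bitChar p b) ^ 2 ≤ 1) (d e : (Fin n → Bool) → ℝ) :
    ∑ b, bitWeight p b * pE p (fun y => (d y + γ * bitChar p b * e y) ^ 2) ^ (q / 2)
      ≤ pE p (fun y => d y ^ 2 + e y ^ 2) ^ (q / 2) := by
  have hr : 0 < q / 2 := by linarith
  have hw := bitWeight_nonneg hp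
  have hpoint : ∀ y, (∑ b, bitWeight p b * (pwt p y * (d y + γ * bitChar p b * e y) ^ 2)
      ^ (q / 2)) ^ (1 / (q / 2)) ≤ pwt p y * (d y ^ 2 + e y ^ 2) := fun y => by
    have hy : 0 ≤ pwt p y := Finset.prod_nonneg fun i _ => hw (y i)
    rw [one_div, rpow_inv_le_iff_of_pos (Finset.sum_nonneg fun b _ =>
      mul_nonneg (hw b) (by positivity)) (by positivity) hr]
    simp only [mul_rpow hy (sq_nonneg _), sq_rpow_half, mul_rpow hy (add_nonneg (sq_nonneg _)
      (sq_nonneg _)), mul_left_comm _ (pwt p y ^ (q / 2)), ← Finset.mul_sum]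
    refine mul_le_mul_of_nonneg_left ?_ (by positivity)
    have hmean : ∑ b, bitWeight p b * (γ * bitChar p b) = 0 := by
      simp only [mul_left_comm _ γ, ← Finset.mul_sum, sum_bitWeight_mul_bitChar hp, mul_zero]
    simpa only [mul_comm _ (e y), ← mul_assoc, add_comm (d y)] using
      sum_mul_abs_add_mul_rpow_le hq sum_bitWeight hw hmean hγ (d y) (e y)
  have hmink := weighted_Lp_sum_le Finset.univ (r := q / 2) (by linarith) hw
    (fun y b => pwt p y * (d y + γ * bitChar p b * e y) ^ 2)
    (fun y b => mul_nonneg (Finset.prod_nonneg fun i _ => hw (y i)) (sq_nonneg _))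
  have hsum := hmink.trans (Finset.sum_le_sum fun y _ => hpoint y)
  rw [one_div] at hsum
  exact (rpow_inv_le_iff_of_pos (Finset.sum_nonneg fun b _ => mul_nonneg (hw b)
    (rpow_nonneg (pE_nonneg hp fun y => sq_nonneg _) _))
    (pE_nonneg hp fun y => by positivity) hr).1 hsum

lemma pE_abs_noiseOp_rpow_le (hp : p ∈ Ioo (0:ℝ) 1) (hq : 2 ≤ q)
    (hγ : ∀ b, (q - 1) * (γ * bitChar p b) ^ 2 ≤ 1) (f : (Fin n → Bool) → ℝ) :
    pE p (fun x => |noiseOp p γ f x| ^ q) ≤ pE p (fun x => f x ^ 2) ^ (q / 2) := by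
  induction n with
  | zero =>
    simp only [noiseOp_fin_zero, pE_fin_zero _ default, sq_rpow_half, le_refl]
  | succ n ih =>
    calc pE p (fun x => |noiseOp p γ f x| ^ q)
        = ∑ b, bitWeight p b * pE p (fun y =>
            |noiseOp p γ (fun y => headMean p f y + γ * bitChar p b * headCoeff p f y) y| ^ q) := by
          simp only [pE_succ (n := n), noiseOp_cons]
      _ ≤ ∑ b, bitWeight p b * pE p (fun y =>
            (headMean p f y + γ * bitChar p b * headCoeff p f y) ^ 2) ^ (q / 2) :=
          Finset.sum_le_sum fun b _ => mul_le_mul_of_nonneg_left (ih _) (bitWeight_nonneg hp b)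
      _ ≤ pE p (fun y => headMean p f y ^ 2 + headCoeff p f y ^ 2) ^ (q / 2) :=
          sum_bitWeight_mul_pE_rpow_le hp hq hγ _ _
      _ = pE p (fun x => f x ^ 2) ^ (q / 2) := by
          rw [pE_sq_eq_headMean_sq_add_headCoeff_sq hp]

end Hypercontractivity

/-- Hypercontractivity for the p-biased measure, smoothing parameter (iii):
γ = √(λ/(1-λ)) / √(q-1). -/
theorem stmt3 (p : ℝ) (hp : p ∈ Set.Ioo (0:ℝ) 1) (q : ℝ) (hq : 2 ≤ q)
    (γ : ℝ) (hγ : γ = Real.sqrt (min p (1 - p) / (1 - min p (1 - p))) / Real.sqrt (q - 1))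
    (n : ℕ) (f : (Fin n → Bool) → ℝ) :
    pNorm p q (noiseOp p γ f) ≤ pNorm p 2 f := by
  have hq1 : 0 < q - 1 := by linarith
  have hγ' : ∀ b, (q - 1) * (γ * bitChar p b) ^ 2 ≤ 1 := fun b => by
    have hm : 0 ≤ min p (1 - p) / (1 - min p (1 - p)) := div_nonneg
      (le_min hp.1.le (by linarith [hp.2])) (by linarith [min_le_left p (1 - p), hp.2])
    rw [hγ, mul_pow, div_pow, sq_sqrt hm, sq_sqrt hq1.le, ← mul_assoc, mul_div_cancel₀ _ hq1.ne']
    exact min_ratio_mul_bitChar_sq_le hp b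
  have hmain := pE_abs_noiseOp_rpow_le hp hq hγ' f
  have hf2 : 0 ≤ pE p (fun x => f x ^ 2) := pE_nonneg hp fun x => sq_nonneg _
  simp only [pNorm, rpow_two, sq_abs]
  calc (pE p fun x => |noiseOp p γ f x| ^ q) ^ (1 / q)
      ≤ (pE p (fun x => f x ^ 2) ^ (q / 2)) ^ (1 / q) :=
        rpow_le_rpow (pE_nonneg hp fun x => by positivity) hmain (by positivity)
    _ = pE p (fun x => f x ^ 2) ^ ((1:ℝ) / 2) := by
        rw [← rpow_mul hf2]
        congr 1
        field_simp
end

section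
/- Let f : {−1,1}^n → ℝ and for p ∈ (0,1) let g(p) = E_{μ_p}[f], where μ_p is the p-biased measure. Then g is differentiable on (0,1) and g'(p) = Σ_{i=1}^n E_{μ_p}[ f∘τ_i^+ − f∘τ_i^− ]. -/
/-!
`E_{μ_p}[f]` is a polynomial in `p`, and the product rule differentiates the weight of `x` into
`Σ_i ±∏_{j ≠ i} w_j(x)`, the sign being that of `x_i`. The factor `∏_{j ≠ i} w_j` does not
see coordinate `i`, so pairing each `x` with its flip in coordinate `i` turns the `i`-th term
into `E_{μ_p}[f∘τ_i⁺ − f∘τ_i⁻]`: both equal half of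
`Σ_x ∏_{j ≠ i} w_j(x) (f(τ_i⁺ x) − f(τ_i⁻ x))`.
-/

open Filter Function Real

open Finset

section

variable {n : ℕ}

noncomputable def pwtExcept (p : ℝ) (i : Fin n) (x : Fin n → Bool) : ℝ :=
  ∏ j ∈ univ.erase i, if x j then p else 1 - p

theorem pwt_eq_mul_pwtExcept (p : ℝ) (i : Fin n) (x : Fin n → Bool) :
    pwt p x = (if x i then p else 1 - p) * pwtExcept p i x :=
  (mul_prod_erase univ _ (mem_univ i)).symm

theorem pwtExcept_update (p : ℝ) (i : Fin n) (x : Fin n → Bool) (b : Bool) :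
    pwtExcept p i (update x i b) = pwtExcept p i x :=
  prod_congr rfl fun _ hj => by rw [update_of_ne (ne_of_mem_erase hj)]

theorem hasDerivAt_pwt (p : ℝ) (x : Fin n → Bool) :
    HasDerivAt (fun t => pwt t x) (∑ i, (if x i then 1 else -1) * pwtExcept p i x) p := by
  have h := HasDerivAt.fun_finsetProd (u := univ) (x := p)
    (f := fun i t => if x i then t else 1 - t) (f' := fun i => if x i then 1 else -1)
    fun i _ => by
      cases x i
      · simpa using (hasDerivAt_id' p).const_sub 1
      · exact hasDerivAt_id' p
  simpa [pwt, pwtExcept, smul_eq_mul, mul_comm] using h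

/-- `update x i true` and `update x i false` are `x` and its flip in coordinate `i`. -/
theorem sum_update_true_add_update_false (i : Fin n) (F : (Fin n → Bool) → ℝ) :
    ∑ x, (F (update x i true) + F (update x i false)) = 2 * ∑ x, F x := by
  have hflip : Involutive fun x : Fin n → Bool => update x i (!x i) := fun x => by simp
  have hpair : ∀ x, F (update x i true) + F (update x i false) = F x + F (update x i (!x i)) := by
    intro x
    cases hx : x i
    · rw [add_comm, ← hx, update_eq_self, hx]; rfl
    · rw [← hx, update_eq_self, hx]; rfl
  rw [sum_congr rfl fun x _ => hpair x, sum_add_distrib, two_mul]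
  exact congrArg _ (Equiv.sum_comp (hflip.toPerm _) F)

theorem sum_sign_mul_pwtExcept_mul (p : ℝ) (i : Fin n) (f : (Fin n → Bool) → ℝ) :
    ∑ x, (if x i then 1 else -1) * pwtExcept p i x * f x =
      pE p (fun x => f (update x i true) - f (update x i false)) := by
  apply mul_left_cancel₀ (two_ne_zero (α := ℝ))
  rw [pE, ← sum_update_true_add_update_false i, ← sum_update_true_add_update_false i]
  refine sum_congr rfl fun x _ => ?_
  simp only [pwt_eq_mul_pwtExcept p i, pwtExcept_update, update_self, update_idem,
    if_true, Bool.false_eq_true, if_false]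
  ring

end

theorem stmt8_general (n : ℕ) (f : (Fin n → Bool) → ℝ) (p : ℝ) :
    HasDerivAt (fun t : ℝ => pE t f)
      (∑ i : Fin n,
        pE p (fun x => f (Function.update x i true) - f (Function.update x i false))) p := by
  have h : HasDerivAt (fun t => pE t f)
      (∑ x, (∑ i, (if x i then 1 else -1) * pwtExcept p i x) * f x) p :=
    HasDerivAt.fun_sum fun x _ => (hasDerivAt_pwt p x).mul_const (f x)
  convert h using 1
  simp only [sum_mul, ← sum_sign_mul_pwtExcept_mul]
  exact sum_comm

/-- Rossignol's lemma: the map p ↦ E_{μ_p}[f] is differentiable on (0,1) with derivative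
Σᵢ E_{μ_p}[f∘τᵢ⁺ - f∘τᵢ⁻]. -/
theorem stmt8 (n : ℕ) (f : (Fin n → Bool) → ℝ) (p : ℝ) (hp : p ∈ Set.Ioo (0:ℝ) 1) :
    HasDerivAt (fun t : ℝ => pE t f)
      (∑ i : Fin n,
        pE p (fun x => f (Function.update x i true) - f (Function.update x i false))) p :=
  stmt8_general n f p
end
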